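/- Let b ≥ 1 be a real number, let c > 0, and let d = 4⌈b⌉ − 2, where ⌈b⌉ denotes the ceiling of b. Then the convex generator e_{1,0}^d e_{0,1}^2 (a horizontal edge of multiplicity d and a vertical edge of multiplicity 2, both labeled 'e') is minimal for the polydisk P(bc,c). -/

import Mathlib

open Real Set

noncomputable section

/-! ### Symplectic embeddings of subsets of ℝ⁴ ≅ ℂ² -/

/-- ℝ⁴ with coordinates `(x₁, y₁, x₂, y₂)`, identified with ℂ² via `z_j = x_j + i y_j`. -/
abbrev R4 : Type := ℝ × ℝ × ℝ × ℝ

/-- The standard symplectic form `ω = dx₁∧dy₁ + dx₂∧dy₂` on ℝ⁴, as a bilinear pairing. -/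
def omegaStd (v w : R4) : ℝ :=
  v.1 * w.2.1 - v.2.1 * w.1 + v.2.2.1 * w.2.2.2 - v.2.2.2 * w.2.2.1

/-- `X` symplectically embeds into `X'`: there is an injective smooth map `φ` defined on an
open neighborhood `U` of `X` with `φ(X) ⊆ X'`, whose derivative at every point preserves
the standard symplectic form. -/
def SymplecticEmbeds (X X' : Set R4) : Prop :=
  ∃ (U : Set R4) (φ : R4 → R4),
    IsOpen U ∧ X ⊆ U ∧ ContDiffOn ℝ (⊤ : ℕ∞) φ U ∧ Set.InjOn φ U ∧ φ '' X ⊆ X' ∧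
    ∀ p ∈ U, ∀ v w : R4,
      omegaStd (fderiv ℝ φ p v) (fderiv ℝ φ p w) = omegaStd v w

/-- The polydisk `P(a,b) = {z : π|z₁|² ≤ a, π|z₂|² ≤ b}`. -/
def polydisk (a b : ℝ) : Set R4 :=
  {z | π * (z.1 ^ 2 + z.2.1 ^ 2) ≤ a ∧ π * (z.2.2.1 ^ 2 + z.2.2.2 ^ 2) ≤ b}

/-- The ellipsoid `E(a,b) = {z : π|z₁|²/a + π|z₂|²/b ≤ 1}`. -/
def ellipsoid (a b : ℝ) : Set R4 :=
  {z | π * (z.1 ^ 2 + z.2.1 ^ 2) / a + π * (z.2.2.1 ^ 2 + z.2.2.2 ^ 2) / b ≤ 1}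

/-- The ball `B(c) = E(c,c)`. -/
def ball4 (c : ℝ) : Set R4 := ellipsoid c c

/-! ### Convex generators -/

/-- A convex generator, encoded as a commutative formal product of symbols `e_{a,b}` and
`h_{a,b}` over coprime pairs `(a,b)` of nonnegative integers.  `mult (a,b)` is the total
exponent of the direction `(a,b)`, so the corresponding edge of the underlying convex
integral path has displacement vector `(mult (a,b) • a, - mult (a,b) • b)`, and
`hLabel (a,b) = true` iff the factor `h_{a,b}` occurs, i.e. iff this edge is labeled `h`.
No factor `h_{a,b}` may be repeated, and `h_{1,0}`, `h_{0,1}` may not occur (horizontal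
and vertical edges can only be labeled `e`). -/
structure ConvexGenerator where
  mult : ℕ × ℕ → ℕ
  hLabel : ℕ × ℕ → Bool
  coprime_of_mem : ∀ d, mult d ≠ 0 → Nat.Coprime d.1 d.2
  finite_support : {d : ℕ × ℕ | mult d ≠ 0}.Finite
  mult_pos_of_h : ∀ d, hLabel d = true → mult d ≠ 0
  h_ne_horiz : hLabel (1, 0) = false
  h_ne_vert : hLabel (0, 1) = false

namespace ConvexGenerator

/-- `x(Λ)`, the horizontal coordinate of the right endpoint of the path. -/
def xCoord (Λ : ConvexGenerator) : ℕ := ∑ᶠ d : ℕ × ℕ, Λ.mult d * d.1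

/-- `y(Λ)`, the vertical coordinate of the left endpoint of the path. -/
def yCoord (Λ : ConvexGenerator) : ℕ := ∑ᶠ d : ℕ × ℕ, Λ.mult d * d.2

/-- `m(Λ)`, the number of lattice points on the path minus one (the total multiplicity). -/
def mTotal (Λ : ConvexGenerator) : ℕ := ∑ᶠ d : ℕ × ℕ, Λ.mult d

/-- `h(Λ)`, the number of edges labeled `h`. -/
def hCount (Λ : ConvexGenerator) : ℕ := {d : ℕ × ℕ | Λ.hLabel d = true}.ncard

/-- The maximum of the linear functional `(p,q) ↦ b' p + a' q` over the path `Λ`: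
the path starts at `(0, y(Λ))` and the maximum of the functional over the concave path
is obtained by adding all positive increments `m (b' a - a' b)` of its edges
(truncated subtraction implements the positive part). -/
def suppFn (Λ : ConvexGenerator) (a' b' : ℕ) : ℕ :=
  a' * Λ.yCoord + ∑ᶠ d : ℕ × ℕ, Λ.mult d * (b' * d.1 - a' * d.2)

/-- The set of lattice points in the closed region enclosed by the path `Λ` and the two
coordinate axes (including lattice points on the boundary). -/
def latticeRegion (Λ : ConvexGenerator) : Set (ℕ × ℕ) :=
  {p | ∀ a' b' : ℕ, b' * p.1 + a' * p.2 ≤ Λ.suppFn a' b'}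

/-- `L(Λ)`, the number of lattice points enclosed by `Λ` and the axes (boundary included). -/
def LCount (Λ : ConvexGenerator) : ℕ := Λ.latticeRegion.ncard

/-- The ECH index `I(Λ) = 2(L(Λ) - 1) - h(Λ)`. -/
def iIndex (Λ : ConvexGenerator) : ℤ := 2 * ((Λ.LCount : ℤ) - 1) - (Λ.hCount : ℤ)

/-- All edges of `Λ` are labeled `e`. -/
def allE (Λ : ConvexGenerator) : Prop := ∀ d : ℕ × ℕ, Λ.hLabel d = false

/-- The exponent of the factor `e_{a,b}` in the formal product `Λ`. -/
def eExp (Λ : ConvexGenerator) (d : ℕ × ℕ) : ℕ :=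
  Λ.mult d - (if Λ.hLabel d = true then 1 else 0)

/-- The symplectic action `A_Ω(Λ) = Σ_ν max_{p ∈ Ω} (ν⃗ × p)`: the edge in direction
`(a,b)` with multiplicity `m` has `ν⃗ = (m a, -m b)`, and `ν⃗ × p = m (b p₁ + a p₂)`. -/
def action (Λ : ConvexGenerator) (Ω : Set (ℝ × ℝ)) : ℝ :=
  ∑ᶠ d : ℕ × ℕ, (Λ.mult d : ℝ) *
    sSup ((fun p : ℝ × ℝ => (d.2 : ℝ) * p.1 + (d.1 : ℝ) * p.2) '' Ω)

end ConvexGenerator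

/-- `Λ₁` and `Λ₂` have no elliptic orbit in common: no factor `e_{a,b}` appears in both. -/
def NoCommonElliptic (Λ₁ Λ₂ : ConvexGenerator) : Prop :=
  ∀ d : ℕ × ℕ, Λ₁.eExp d = 0 ∨ Λ₂.eExp d = 0

/-- `Λ₁` and `Λ₂` have no hyperbolic orbit in common: no factor `h_{a,b}` appears in both. -/
def NoCommonHyperbolic (Λ₁ Λ₂ : ConvexGenerator) : Prop :=
  ∀ d : ℕ × ℕ, ¬(Λ₁.hLabel d = true ∧ Λ₂.hLabel d = true)

/-- The generator `e_{a,b}^m`: a single edge in the coprime direction `(a,b)` with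
multiplicity `m`, labeled `e`. -/
def eGen (a b : ℕ) (hab : Nat.Coprime a b) (m : ℕ) : ConvexGenerator where
  mult d := if d = (a, b) then m else 0
  hLabel _ := false
  coprime_of_mem := by
    intro d hd
    have hd' : d = (a, b) := by
      by_contra h
      simp [h] at hd
    subst hd'
    exact hab
  finite_support := by
    apply Set.Finite.subset (Set.finite_singleton (a, b))
    intro d hd
    simp only [Set.mem_setOf_eq] at hd
    by_contra h
    simp only [Set.mem_singleton_iff] at h
    simp [h] at hd
  mult_pos_of_h := by intro d h; simp at h
  h_ne_horiz := rfl
  h_ne_vert := rfl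

/-- `e_{1,0}^m`: a horizontal edge of multiplicity `m` labeled `e`. -/
def e10 (m : ℕ) : ConvexGenerator := eGen 1 0 (Nat.coprime_one_left 0) m

/-- `e_{0,1}^m`: a vertical edge of multiplicity `m` labeled `e`. -/
def e01 (m : ℕ) : ConvexGenerator := eGen 0 1 (Nat.coprime_one_right 0) m

/-- `e_{1,1}^m`: a single edge from `(0,m)` to `(m,0)` labeled `e`. -/
def e11 (m : ℕ) : ConvexGenerator := eGen 1 1 (Nat.coprime_one_left 1) m

/-- `e_{b,1}^m`: a single edge with displacement vector `(m b, -m)` labeled `e`. -/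
def eb1 (b m : ℕ) : ConvexGenerator := eGen b 1 (Nat.coprime_one_right b) m

/-- The product of two convex generators (concatenation of formal products; faithful to
the paper's product whenever the factors have no hyperbolic orbit in common). -/
def mulCG (Λ₁ Λ₂ : ConvexGenerator) : ConvexGenerator where
  mult d := Λ₁.mult d + Λ₂.mult d
  hLabel d := Λ₁.hLabel d || Λ₂.hLabel d
  coprime_of_mem := by
    intro d hd
    have hd' : Λ₁.mult d + Λ₂.mult d ≠ 0 := hd
    rcases Nat.eq_zero_or_pos (Λ₁.mult d) with h1 | h1
    · exact Λ₂.coprime_of_mem d (by omega)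
    · exact Λ₁.coprime_of_mem d (by omega)
  finite_support := by
    apply Set.Finite.subset (Λ₁.finite_support.union Λ₂.finite_support)
    intro d hd
    simp only [Set.mem_setOf_eq] at hd
    simp only [Set.mem_union, Set.mem_setOf_eq]
    omega
  mult_pos_of_h := by
    intro d h
    show Λ₁.mult d + Λ₂.mult d ≠ 0
    rcases Bool.or_eq_true_iff.mp h with h' | h'
    · have := Λ₁.mult_pos_of_h d h'; omega
    · have := Λ₂.mult_pos_of_h d h'; omega
  h_ne_horiz := by rw [Bool.or_eq_false_iff]; exact ⟨Λ₁.h_ne_horiz, Λ₂.h_ne_horiz⟩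
  h_ne_vert := by rw [Bool.or_eq_false_iff]; exact ⟨Λ₁.h_ne_vert, Λ₂.h_ne_vert⟩

/-- The product `∏_{i ∈ S} Λᵢ` of a family of convex generators (faithful to the paper's
product whenever the factors pairwise have no hyperbolic orbit in common). -/
def finProd {n : ℕ} (S : Finset (Fin n)) (Λs : Fin n → ConvexGenerator) : ConvexGenerator where
  mult d := ∑ i ∈ S, (Λs i).mult d
  hLabel d := decide (∃ i ∈ S, (Λs i).hLabel d = true)
  coprime_of_mem := by
    intro d hd
    have : ∃ i ∈ S, (Λs i).mult d ≠ 0 := by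
      by_contra hcon
      push_neg at hcon
      exact hd (Finset.sum_eq_zero hcon)
    obtain ⟨i, _, hi⟩ := this
    exact (Λs i).coprime_of_mem d hi
  finite_support := by
    apply Set.Finite.subset
      (Set.Finite.biUnion S.finite_toSet fun i _ => (Λs i).finite_support)
    intro d hd
    simp only [Set.mem_setOf_eq] at hd
    have : ∃ i ∈ S, (Λs i).mult d ≠ 0 := by
      by_contra hcon
      push_neg at hcon
      exact hd (Finset.sum_eq_zero hcon)
    obtain ⟨i, hiS, hi⟩ := this
    exact Set.mem_biUnion hiS hi
  mult_pos_of_h := by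
    intro d h
    obtain ⟨i, hiS, hi⟩ := of_decide_eq_true h
    intro hsum
    rw [Finset.sum_eq_zero_iff] at hsum
    exact (Λs i).mult_pos_of_h d hi (hsum i hiS)
  h_ne_horiz := by
    rw [decide_eq_false_iff_not]
    rintro ⟨i, -, hi⟩
    rw [(Λs i).h_ne_horiz] at hi
    exact Bool.false_ne_true hi
  h_ne_vert := by
    rw [decide_eq_false_iff_not]
    rintro ⟨i, -, hi⟩
    rw [(Λs i).h_ne_vert] at hi
    exact Bool.false_ne_true hi

/-! ### Convex toric domains -/

/-- The moment-map region `Ω` of a convex toric domain: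
`Ω = {(x,y) : 0 ≤ x ≤ A, 0 ≤ y ≤ f(x)}` with `f : [0,A] → ℝ≥0` nonincreasing concave. -/
structure ConvexToricDomain where
  A : ℝ
  A_pos : 0 < A
  f : ℝ → ℝ
  f_nonneg : ∀ x ∈ Set.Icc (0 : ℝ) A, 0 ≤ f x
  f_anti : AntitoneOn f (Set.Icc (0 : ℝ) A)
  f_concave : ConcaveOn ℝ (Set.Icc (0 : ℝ) A) f

namespace ConvexToricDomain

/-- The region `Ω ⊆ ℝ²`. -/
def Omega (D : ConvexToricDomain) : Set (ℝ × ℝ) :=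
  {p | 0 ≤ p.1 ∧ p.1 ≤ D.A ∧ 0 ≤ p.2 ∧ p.2 ≤ D.f p.1}

/-- The toric domain `X_Ω = {z ∈ ℂ² : (π|z₁|², π|z₂|²) ∈ Ω}` as a subset of ℝ⁴. -/
def toDomain (D : ConvexToricDomain) : Set R4 :=
  {z | (π * (z.1 ^ 2 + z.2.1 ^ 2), π * (z.2.2.1 ^ 2 + z.2.2.2 ^ 2)) ∈ D.Omega}

end ConvexToricDomain

/-- The moment region of the polydisk `P(a,b)`: the rectangle `[0,a] × [0,b]`. -/
def rectOmega (a b : ℝ) : Set (ℝ × ℝ) :=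
  {p | 0 ≤ p.1 ∧ p.1 ≤ a ∧ 0 ≤ p.2 ∧ p.2 ≤ b}

/-- The moment region of the ellipsoid `E(a,b)`: the triangle with vertices
`(0,0)`, `(a,0)`, `(0,b)`. -/
def triOmega (a b : ℝ) : Set (ℝ × ℝ) :=
  {p | 0 ≤ p.1 ∧ 0 ≤ p.2 ∧ p.1 / a + p.2 / b ≤ 1}

/-- `Λ ≤_{Ω,Ω'} Λ'` (Definition 1.16 of the paper, for `Λ'` with all edges `e`):
(i) equal ECH indices, (ii) `A_Ω(Λ) ≤ A_{Ω'}(Λ')`, and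
(iii) `x(Λ) + y(Λ) - h(Λ)/2 ≥ x(Λ') + y(Λ') + m(Λ') - 1`. -/
def genLE (Ω Ω' : Set (ℝ × ℝ)) (Λ Λ' : ConvexGenerator) : Prop :=
  Λ.iIndex = Λ'.iIndex ∧
  Λ.action Ω ≤ Λ'.action Ω' ∧
  ((Λ'.xCoord : ℝ) + (Λ'.yCoord : ℝ) + (Λ'.mTotal : ℝ) - 1 ≤
    (Λ.xCoord : ℝ) + (Λ.yCoord : ℝ) - (Λ.hCount : ℝ) / 2)

/-- `Λ` is minimal for the convex toric domain with moment region `Ω`: all edges of `Λ`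
are labeled `e`, and `Λ` uniquely minimizes the action among convex generators with the
same ECH index and all edges labeled `e`. -/
def IsMinimal (Ω : Set (ℝ × ℝ)) (Λ : ConvexGenerator) : Prop :=
  Λ.allE ∧ ∀ Λ' : ConvexGenerator, Λ'.allE → Λ'.iIndex = Λ.iIndex → Λ' ≠ Λ →
    Λ.action Ω < Λ'.action Ω

end

section AuxLemmas

open ConvexGenerator

lemma CG_ext {Λ₁ Λ₂ : ConvexGenerator} (h1 : Λ₁.mult = Λ₂.mult)
    (h2 : Λ₁.hLabel = Λ₂.hLabel) : Λ₁ = Λ₂ := by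
  cases Λ₁; cases Λ₂; cases h1; cases h2; rfl

lemma box_eq (x y : ℕ) :
    {p : ℕ × ℕ | p.1 ≤ x ∧ p.2 ≤ y} = ↑(Finset.range (x+1) ×ˢ Finset.range (y+1)) := by
  ext p
  simp [Nat.lt_succ_iff]

lemma box_finite (x y : ℕ) : {p : ℕ × ℕ | p.1 ≤ x ∧ p.2 ≤ y}.Finite := by
  rw [box_eq]; exact Finset.finite_toSet _

lemma box_ncard (x y : ℕ) : {p : ℕ × ℕ | p.1 ≤ x ∧ p.2 ≤ y}.ncard = (x+1)*(y+1) := by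
  rw [box_eq, Set.ncard_coe_finset, Finset.card_product, Finset.card_range, Finset.card_range]

lemma finsum_mult_eq (Λ : ConvexGenerator) (g : ℕ × ℕ → ℕ) :
    ∑ᶠ v, Λ.mult v * g v = ∑ v ∈ Λ.finite_support.toFinset, Λ.mult v * g v := by
  apply finsum_eq_finset_sum_of_support_subset
  intro v hv
  simp only [Function.mem_support] at hv
  simp only [Set.Finite.coe_toFinset, Set.mem_setOf_eq]
  intro h0
  apply hv
  rw [h0, zero_mul]

lemma finsum_mult_eq_real (Λ : ConvexGenerator) (g : ℕ × ℕ → ℝ) :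
    ∑ᶠ v, (Λ.mult v : ℝ) * g v = ∑ v ∈ Λ.finite_support.toFinset, (Λ.mult v : ℝ) * g v := by
  apply finsum_eq_finset_sum_of_support_subset
  intro v hv
  simp only [Function.mem_support] at hv
  simp only [Set.Finite.coe_toFinset, Set.mem_setOf_eq]
  intro h0
  apply hv
  rw [h0, Nat.cast_zero, zero_mul]

lemma xCoord_eq_sum (Λ : ConvexGenerator) :
    Λ.xCoord = ∑ v ∈ Λ.finite_support.toFinset, Λ.mult v * v.1 :=
  finsum_mult_eq Λ (fun v => v.1)

lemma yCoord_eq_sum (Λ : ConvexGenerator) :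
    Λ.yCoord = ∑ v ∈ Λ.finite_support.toFinset, Λ.mult v * v.2 :=
  finsum_mult_eq Λ (fun v => v.2)

lemma suppFn_01 (Λ : ConvexGenerator) : Λ.suppFn 0 1 = Λ.xCoord := by
  unfold ConvexGenerator.suppFn ConvexGenerator.xCoord
  simp

lemma suppFn_10 (Λ : ConvexGenerator) : Λ.suppFn 1 0 = Λ.yCoord := by
  unfold ConvexGenerator.suppFn
  simp

lemma suppFn_11 (Λ : ConvexGenerator) :
    Λ.suppFn 1 1 = Λ.yCoord + ∑ᶠ v : ℕ × ℕ, Λ.mult v * (v.1 - v.2) := by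
  unfold ConvexGenerator.suppFn
  simp

lemma mem_region_box {Λ : ConvexGenerator} {p : ℕ × ℕ} (h : p ∈ Λ.latticeRegion) :
    p.1 ≤ Λ.xCoord ∧ p.2 ≤ Λ.yCoord := by
  have h' : ∀ a' b' : ℕ, b' * p.1 + a' * p.2 ≤ Λ.suppFn a' b' := h
  constructor
  · have := h' 0 1
    rw [suppFn_01] at this
    simpa using this
  · have := h' 1 0
    rw [suppFn_10] at this
    simpa using this

lemma LCount_le (Λ : ConvexGenerator) : Λ.LCount ≤ (Λ.xCoord + 1) * (Λ.yCoord + 1) := by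
  rw [← box_ncard]
  exact Set.ncard_le_ncard (fun p hp => mem_region_box hp) (box_finite _ _)

lemma hCount_allE {Λ : ConvexGenerator} (h : Λ.allE) : Λ.hCount = 0 := by
  unfold ConvexGenerator.hCount
  have : {v : ℕ × ℕ | Λ.hLabel v = true} = ∅ := by
    ext v
    simp [h v]
  rw [this, Set.ncard_empty]

lemma mult0 (d : ℕ) (v : ℕ × ℕ) :
    (mulCG (e10 d) (e01 2)).mult v
      = (if v = ((1:ℕ), (0:ℕ)) then d else 0) + (if v = ((0:ℕ), (1:ℕ)) then 2 else 0) := rfl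

lemma hLabel0 (d : ℕ) (v : ℕ × ℕ) : (mulCG (e10 d) (e01 2)).hLabel v = false := rfl

lemma allE0 (d : ℕ) : (mulCG (e10 d) (e01 2)).allE := fun v => hLabel0 d v

lemma finsum0 (d : ℕ) (g : ℕ × ℕ → ℕ) :
    (∑ᶠ v : ℕ × ℕ, (mulCG (e10 d) (e01 2)).mult v * g v) = d * g (1,0) + 2 * g (0,1) := by
  rw [finsum_eq_finset_sum_of_support_subset _
    (s := ({((1:ℕ),(0:ℕ)), ((0:ℕ),(1:ℕ))} : Finset (ℕ × ℕ))) ?_]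
  · rw [Finset.sum_pair (by decide)]
    rw [mult0, mult0]
    norm_num
  · intro v hv
    simp only [Function.mem_support, mult0] at hv
    by_contra hmem
    simp only [Finset.coe_insert, Set.mem_insert_iff, Finset.coe_singleton,
      Set.mem_singleton_iff] at hmem
    push_neg at hmem
    rw [if_neg hmem.1, if_neg hmem.2] at hv
    simp at hv

lemma xCoord0 (d : ℕ) : (mulCG (e10 d) (e01 2)).xCoord = d := by
  have := finsum0 d (fun v => v.1)
  unfold ConvexGenerator.xCoord
  rw [this]
  simp

lemma yCoord0 (d : ℕ) : (mulCG (e10 d) (e01 2)).yCoord = 2 := by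
  have := finsum0 d (fun v => v.2)
  unfold ConvexGenerator.yCoord
  rw [this]
  simp

lemma suppFn0 (d a' b' : ℕ) :
    (mulCG (e10 d) (e01 2)).suppFn a' b' = a' * 2 + b' * d := by
  unfold ConvexGenerator.suppFn
  rw [yCoord0]
  have := finsum0 d (fun v => b' * v.1 - a' * v.2)
  rw [this]
  simp [mul_comm]

lemma region0 (d : ℕ) :
    (mulCG (e10 d) (e01 2)).latticeRegion = {p : ℕ × ℕ | p.1 ≤ d ∧ p.2 ≤ 2} := by
  ext p
  constructor
  · intro hp
    have := mem_region_box hp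
    rw [xCoord0, yCoord0] at this
    exact this
  · rintro ⟨h1, h2⟩
    intro a' b'
    rw [suppFn0]
    have e1 : b' * p.1 ≤ b' * d := Nat.mul_le_mul le_rfl h1
    have e2 : a' * p.2 ≤ a' * 2 := Nat.mul_le_mul le_rfl h2
    omega

lemma LCount0 (d : ℕ) : (mulCG (e10 d) (e01 2)).LCount = (d+1)*3 := by
  unfold ConvexGenerator.LCount
  rw [region0, box_ncard]

lemma sSup_rect (a c : ℝ) (ha : 0 ≤ a) (hcc : 0 ≤ c) (v : ℕ × ℕ) :
    sSup ((fun p : ℝ × ℝ => (v.2 : ℝ) * p.1 + (v.1 : ℝ) * p.2) '' rectOmega a c)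
      = (v.2 : ℝ) * a + (v.1 : ℝ) * c := by
  apply IsGreatest.csSup_eq
  constructor
  · exact ⟨(a, c), ⟨ha, le_refl _, hcc, le_refl _⟩, rfl⟩
  · rintro z ⟨p, ⟨h1, h2, h3, h4⟩, rfl⟩
    have e1 : (v.2 : ℝ) * p.1 ≤ (v.2 : ℝ) * a :=
      mul_le_mul_of_nonneg_left h2 (by positivity)
    have e2 : (v.1 : ℝ) * p.2 ≤ (v.1 : ℝ) * c :=
      mul_le_mul_of_nonneg_left h4 (by positivity)
    simp only []
    linarith

lemma action_rect (Λ : ConvexGenerator) (a c : ℝ) (ha : 0 ≤ a) (hcc : 0 ≤ c) :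
    Λ.action (rectOmega a c) = c * Λ.xCoord + a * Λ.yCoord := by
  unfold ConvexGenerator.action
  have h1 : ∀ v : ℕ × ℕ, (Λ.mult v : ℝ) *
      sSup ((fun p : ℝ × ℝ => (v.2 : ℝ) * p.1 + (v.1 : ℝ) * p.2) '' rectOmega a c)
      = (Λ.mult v : ℝ) * ((v.2 : ℝ) * a + (v.1 : ℝ) * c) := by
    intro v
    rw [sSup_rect a c ha hcc v]
  rw [finsum_congr h1, finsum_mult_eq_real Λ (fun v => (v.2 : ℝ) * a + (v.1 : ℝ) * c)]
  have hx : (Λ.xCoord : ℝ) = ∑ v ∈ Λ.finite_support.toFinset, (Λ.mult v : ℝ) * (v.1 : ℝ) := by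
    rw [xCoord_eq_sum, Nat.cast_sum]
    exact Finset.sum_congr rfl (fun v _ => by push_cast; ring)
  have hy : (Λ.yCoord : ℝ) = ∑ v ∈ Λ.finite_support.toFinset, (Λ.mult v : ℝ) * (v.2 : ℝ) := by
    rw [yCoord_eq_sum, Nat.cast_sum]
    exact Finset.sum_congr rfl (fun v _ => by push_cast; ring)
  rw [hx, hy, Finset.mul_sum, Finset.mul_sum, ← Finset.sum_add_distrib]
  exact Finset.sum_congr rfl (fun v _ => by ring)

end AuxLemmas

/-- **Step 3 of the proof of Theorem 1.8**: for `b ≥ 1`, `c > 0` and `d = 4⌈b⌉ - 2`, the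
convex generator `e_{1,0}^d e_{0,1}^2` is minimal for `P(bc,c)`. -/
theorem polydisks_step3_minimal (b c : ℝ) (hb : 1 ≤ b) (hc : 0 < c)
    (d : ℕ) (hd : (d : ℤ) = 4 * ⌈b⌉ - 2) :
    IsMinimal (rectOmega (b * c) c) (mulCG (e10 d) (e01 2)) := by
  have hn1 : 1 ≤ ⌈b⌉ := by
    have : (1 : ℝ) ≤ (⌈b⌉ : ℝ) := le_trans hb (Int.le_ceil b)
    exact_mod_cast this
  have hbn : b ≤ (⌈b⌉ : ℝ) := Int.le_ceil b
  have hnb : ((⌈b⌉ : ℤ) : ℝ) < b + 1 := Int.ceil_lt_add_one b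
  have hdR : (d : ℝ) = 4 * (⌈b⌉ : ℝ) - 2 := by exact_mod_cast hd
  have hbc : 0 ≤ b * c := by positivity
  have hc0 : 0 ≤ c := le_of_lt hc
  constructor
  · exact allE0 d
  · intro Λ' hE' hI hne
    -- L(Λ') = L(Λ₀) = 3(d+1)
    have hH' : Λ'.hCount = 0 := hCount_allE hE'
    have hH0 : (mulCG (e10 d) (e01 2)).hCount = 0 := hCount_allE (allE0 d)
    have hL0 : (mulCG (e10 d) (e01 2)).LCount = (d+1)*3 := LCount0 d
    have hL' : Λ'.LCount = (d+1)*3 := by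
      unfold ConvexGenerator.iIndex at hI
      rw [hH', hH0, hL0] at hI
      omega
    set x := Λ'.xCoord with hxdef
    set y := Λ'.yCoord with hydef
    have hbox : (d+1)*3 ≤ (x+1)*(y+1) := hL' ▸ LCount_le Λ'
    rw [action_rect _ _ _ hbc hc0, action_rect _ _ _ hbc hc0, xCoord0, yCoord0]
    by_contra hcon
    push_neg at hcon
    -- hcon : c * x + b*c * y ≤ c * d + b*c * 2
    rw [← hxdef, ← hydef] at hcon
    push_cast at hcon
    have hxy : (x : ℝ) + b * y ≤ (d : ℝ) + 2 * b := by
      have h1 : c * ((x : ℝ) + b * y) ≤ c * ((d : ℝ) + 2 * b) := by nlinarith [hcon]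
      exact (mul_le_mul_iff_right₀ hc).mp h1
    rcases Nat.lt_or_ge y 3 with hy | hy3
    · interval_cases y
      · -- y = 0
        have hx3 : 3 * d + 2 ≤ x := by omega
        have hx3' : 3 * (d : ℝ) + 2 ≤ (x : ℝ) := by exact_mod_cast hx3
        push_cast at hxy
        nlinarith [hxy, hx3', hdR, hbn, hb]
      · -- y = 1
        have hx3 : 3 * d + 1 ≤ 2 * x := by omega
        have hx3' : 3 * (d : ℝ) + 1 ≤ 2 * (x : ℝ) := by exact_mod_cast hx3
        push_cast at hxy
        nlinarith [hxy, hx3', hdR, hbn, hb]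
      · -- y = 2 : the equality case
        have hdx : d ≤ x := by omega
        have hxdR : (x : ℝ) ≤ (d : ℝ) := by push_cast at hxy; linarith
        have hxd : x = d := le_antisymm (by exact_mod_cast hxdR) hdx
        -- the lattice region of Λ' is the full box
        have hy2 : Λ'.yCoord = 2 := hydef.symm
        have hx2 : Λ'.xCoord = d := by rw [← hxdef]; exact hxd
        have hsub : Λ'.latticeRegion ⊆ {p : ℕ × ℕ | p.1 ≤ d ∧ p.2 ≤ 2} := by
          intro p hp
          have := mem_region_box hp
          rw [hx2, hy2] at this
          exact this
        have hreg : Λ'.latticeRegion = {p : ℕ × ℕ | p.1 ≤ d ∧ p.2 ≤ 2} := by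
          apply Set.eq_of_subset_of_ncard_le hsub _ (box_finite d 2)
          rw [box_ncard]
          have : Λ'.latticeRegion.ncard = (d+1)*3 := hL'
          omega
        have hmem : ((d : ℕ), (2 : ℕ)) ∈ Λ'.latticeRegion := by
          rw [hreg]; exact ⟨le_rfl, le_rfl⟩
        have hkey : 1 * d + 1 * 2 ≤ Λ'.suppFn 1 1 := hmem 1 1
        rw [suppFn_11, hy2] at hkey
        have hge : d ≤ ∑ᶠ v : ℕ × ℕ, Λ'.mult v * (v.1 - v.2) := by omega
        set S := Λ'.finite_support.toFinset with hS
        have hsum1 : ∑ᶠ v : ℕ × ℕ, Λ'.mult v * (v.1 - v.2)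
            = ∑ v ∈ S, Λ'.mult v * (v.1 - v.2) := finsum_mult_eq Λ' (fun v => v.1 - v.2)
        have hsum2 : d = ∑ v ∈ S, Λ'.mult v * v.1 := by
          rw [← hx2]; exact xCoord_eq_sum Λ'
        have htermwise : ∀ v ∈ S, Λ'.mult v * (v.1 - v.2) ≤ Λ'.mult v * v.1 :=
          fun v _ => Nat.mul_le_mul le_rfl (Nat.sub_le _ _)
        have hsumle : ∑ v ∈ S, Λ'.mult v * (v.1 - v.2) ≤ ∑ v ∈ S, Λ'.mult v * v.1 :=
          Finset.sum_le_sum htermwise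
        have heach : ∀ v ∈ S, Λ'.mult v * (v.1 - v.2) = Λ'.mult v * v.1 := by
          by_contra hcon2
          push_neg at hcon2
          obtain ⟨v0, hv0S, hv0⟩ := hcon2
          have hlt : ∑ v ∈ S, Λ'.mult v * (v.1 - v.2) < ∑ v ∈ S, Λ'.mult v * v.1 :=
            Finset.sum_lt_sum htermwise ⟨v0, hv0S, lt_of_le_of_ne (htermwise v0 hv0S) hv0⟩
          omega
        have hclass : ∀ v : ℕ × ℕ, Λ'.mult v ≠ 0 → v = (1,0) ∨ v = (0,1) := by
          intro v hv
          have hvS : v ∈ S := by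
            rw [hS, Set.Finite.mem_toFinset]
            exact hv
          have h := heach v hvS
          have h2 : v.1 - v.2 = v.1 :=
            Nat.eq_of_mul_eq_mul_left (Nat.pos_of_ne_zero hv) h
          have hcop := Λ'.coprime_of_mem v hv
          have h0 : v.2 = 0 ∨ v.1 = 0 := by omega
          rcases h0 with h0 | h0
          · left
            have h1' : v.1 = 1 := by
              have := hcop
              rw [Nat.Coprime, h0, Nat.gcd_zero_right] at this
              exact this
            exact Prod.ext_iff.mpr ⟨h1', h0⟩
          · right
            have h1' : v.2 = 1 := by
              have := hcop
              rw [Nat.Coprime, h0, Nat.gcd_zero_left] at this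
              exact this
            exact Prod.ext_iff.mpr ⟨h0, h1'⟩
        -- compute multiplicities
        have hm10 : Λ'.mult (1,0) = d := by
          have hsupp : Function.support (fun v : ℕ × ℕ => Λ'.mult v * v.1)
              ⊆ (({((1:ℕ),(0:ℕ))} : Finset (ℕ × ℕ)) : Set (ℕ × ℕ)) := by
            intro v hv
            simp only [Function.mem_support] at hv
            have hm : Λ'.mult v ≠ 0 := by
              intro h0; apply hv; rw [h0, zero_mul]
            rcases hclass v hm with h | h
            · simp [h]
            · exfalso; apply hv; rw [h]; simp
          have := finsum_eq_finset_sum_of_support_subset _ hsupp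
          have hx' : Λ'.xCoord = Λ'.mult (1,0) * 1 := by
            unfold ConvexGenerator.xCoord
            rw [this, Finset.sum_singleton]
          rw [hx2] at hx'
          omega
        have hm01 : Λ'.mult (0,1) = 2 := by
          have hsupp : Function.support (fun v : ℕ × ℕ => Λ'.mult v * v.2)
              ⊆ (({((0:ℕ),(1:ℕ))} : Finset (ℕ × ℕ)) : Set (ℕ × ℕ)) := by
            intro v hv
            simp only [Function.mem_support] at hv
            have hm : Λ'.mult v ≠ 0 := by
              intro h0; apply hv; rw [h0, zero_mul]
            rcases hclass v hm with h | h
            · exfalso; apply hv; rw [h]; simp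
            · simp [h]
          have := finsum_eq_finset_sum_of_support_subset _ hsupp
          have hy' : Λ'.yCoord = Λ'.mult (0,1) * 1 := by
            unfold ConvexGenerator.yCoord
            rw [this, Finset.sum_singleton]
          rw [hy2] at hy'
          omega
        apply hne
        apply CG_ext
        · funext v
          rw [mult0]
          by_cases hv1 : v = ((1:ℕ),(0:ℕ))
          · subst hv1
            simp [hm10]
          · by_cases hv2 : v = ((0:ℕ),(1:ℕ))
            · subst hv2
              simp [hm01]
            · rw [if_neg hv1, if_neg hv2]
              by_contra hm
              rcases hclass v hm with h | h
              · exact hv1 h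
              · exact hv2 h
        · funext v
          rw [hE' v, hLabel0]
    · -- y ≥ 3
      have hy3R : (3 : ℝ) ≤ (y : ℝ) := by exact_mod_cast hy3
      rcases eq_or_lt_of_le hn1 with hn | hn
      · -- ⌈b⌉ = 1, so b = 1 and d = 2
        have hb1 : b = 1 := le_antisymm (by rw [← hn] at hbn; exact_mod_cast hbn) hb
        have hd2 : d = 2 := by omega
        subst hd2
        rw [hb1] at hxy
        have hxy' : x + y ≤ 4 := by
          have : (x : ℝ) + (y : ℝ) ≤ 4 := by push_cast at hxy; linarith
          exact_mod_cast this
        have hx1 : x ≤ 1 := by omega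
        interval_cases x <;> omega
      · -- ⌈b⌉ ≥ 2
        have hn2 : (2 : ℤ) ≤ ⌈b⌉ := hn
        have hn2R : (2 : ℝ) ≤ ((⌈b⌉ : ℤ) : ℝ) := by exact_mod_cast hn2
        have hblow : ((⌈b⌉ : ℤ) : ℝ) - 1 < b := by linarith
        -- x < 4n - 2 - (y-2)(n-1) over ℝ
        have hxlt : (x : ℝ) < 4 * ((⌈b⌉ : ℤ) : ℝ) - 2
            - ((y : ℝ) - 2) * (((⌈b⌉ : ℤ) : ℝ) - 1) := by
          have h1 : (x : ℝ) ≤ (d : ℝ) - ((y : ℝ) - 2) * b := by linarith [hxy]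
          have h2 : ((y : ℝ) - 2) * (((⌈b⌉ : ℤ) : ℝ) - 1) < ((y : ℝ) - 2) * b := by
            apply mul_lt_mul_of_pos_left hblow
            linarith
          rw [hdR] at h1
          linarith
        have hxZ : (x : ℤ) < 4 * ⌈b⌉ - 2 - ((y : ℤ) - 2) * (⌈b⌉ - 1) := by
          exact_mod_cast hxlt
        have hx1 : (x : ℤ) + 1 ≤ 4 * ⌈b⌉ - 2 - ((y : ℤ) - 2) * (⌈b⌉ - 1) := by omega
        have hboxZ : 12 * ⌈b⌉ - 3 ≤ ((x : ℤ) + 1) * ((y : ℤ) + 1) := by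
          have : ((d : ℤ) + 1) * 3 ≤ ((x : ℤ) + 1) * ((y : ℤ) + 1) := by exact_mod_cast hbox
          rw [hd] at this
          linarith
        have hy3Z : (3 : ℤ) ≤ (y : ℤ) := by exact_mod_cast hy3
        have h34 : 0 ≤ ((y : ℤ) - 3) * ((y : ℤ) - 4) := by
          rcases le_or_gt 4 ((y : ℤ)) with h | h
          · exact mul_nonneg (by linarith) (by linarith)
          · have hy3' : (y : ℤ) = 3 := by omega
            rw [hy3']; norm_num
        have hA : 0 ≤ (⌈b⌉ - 1) * (((y : ℤ) - 3) * ((y : ℤ) - 4)) :=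
          mul_nonneg (by linarith) h34
        have hB : 0 ≤ (2 * ⌈b⌉ - 4) * ((y : ℤ) - 3) :=
          mul_nonneg (by linarith) (by linarith)
        have hprod : ((x : ℤ) + 1) * ((y : ℤ) + 1)
            ≤ (4 * ⌈b⌉ - 2 - ((y : ℤ) - 2) * (⌈b⌉ - 1)) * ((y : ℤ) + 1) :=
          mul_le_mul_of_nonneg_right hx1 (by linarith)
        have hid : (4 * ⌈b⌉ - 2 - ((y : ℤ) - 2) * (⌈b⌉ - 1)) * ((y : ℤ) + 1)
            = 12 * ⌈b⌉ - 4 - (⌈b⌉ - 1) * (((y : ℤ) - 3) * ((y : ℤ) - 4))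
              - (2 * ⌈b⌉ - 4) * ((y : ℤ) - 3) := by ring
        linarith [hprod, hboxZ, hA, hB, hid.le, hid.ge]
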